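/- Let L be a real symmetric N×N matrix with orthonormal eigenbasis u_0,…,u_{N−1} and eigenvalues λ_0,…,λ_{N−1}, let h, s, n : ℝ → ℝ be functions with s(λ_ℓ) ≠ 0 and h(λ_ℓ)²s(λ_ℓ)² + n(λ_ℓ) > 0 for every ℓ, define w : ℝ → ℝ on the spectrum by w(λ_ℓ)² = n(λ_ℓ)/s(λ_ℓ)², and let y ∈ ℝ^N. Then the function x ↦ ‖h(L)x − y‖₂² + ‖w(L)x‖₂² attains a unique global minimum at x̄ = g(L)y, where g(λ) = s²(λ)h(λ)/(h²(λ)s²(λ) + n(λ)). That is, when the observation operator is itself a graph filter, the Wiener optimization problem is solved by a single application of the graph Wiener filter. -/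

import Mathlib

open Matrix BigOperators

/-- The graph filter `g(L) = ∑ ℓ, g (λ ℓ) • u_ℓ u_ℓᵀ`, where `u_ℓ` are the columns of `U`. -/
noncomputable def graphFilter {N : ℕ} (U : Matrix (Fin N) (Fin N) ℝ) (lam : Fin N → ℝ)
    (g : ℝ → ℝ) : Matrix (Fin N) (Fin N) ℝ :=
  ∑ ℓ, g (lam ℓ) • Matrix.vecMulVec (fun i => U i ℓ) (fun i => U i ℓ)

lemma graphFilter_eq {N : ℕ} (U : Matrix (Fin N) (Fin N) ℝ) (lam : Fin N → ℝ) (g : ℝ → ℝ) :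
    graphFilter U lam g = U * Matrix.diagonal (fun ℓ => g (lam ℓ)) * Uᵀ := by
  ext i j
  simp only [graphFilter, Matrix.sum_apply, Matrix.mul_apply, Matrix.diagonal_apply,
    Matrix.vecMulVec_apply, Matrix.smul_apply, smul_eq_mul, Matrix.transpose_apply,
    mul_ite, ite_mul, mul_zero, zero_mul, Finset.sum_ite_eq, Finset.sum_ite_eq',
    Finset.mem_univ, if_true]
  exact Finset.sum_congr rfl fun k _ => by ring

lemma filter_mulVec {N : ℕ} (U : Matrix (Fin N) (Fin N) ℝ) (lam : Fin N → ℝ) (g : ℝ → ℝ)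
    (x : Fin N → ℝ) :
    (graphFilter U lam g).mulVec x
      = U.mulVec (fun ℓ => g (lam ℓ) * (Uᵀ.mulVec x ℓ)) := by
  have hd : (fun ℓ => g (lam ℓ) * (Uᵀ.mulVec x ℓ))
      = (Matrix.diagonal (fun ℓ => g (lam ℓ))).mulVec (Uᵀ.mulVec x) := by
    ext ℓ; simp [Matrix.mulVec_diagonal]
  rw [graphFilter_eq, hd, Matrix.mulVec_mulVec, Matrix.mulVec_mulVec, Matrix.mul_assoc]

lemma norm_pres {N : ℕ} (U : Matrix (Fin N) (Fin N) ℝ) (hU : Uᵀ * U = 1)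
    (v : Fin N → ℝ) : ∑ i, (U.mulVec v i)^2 = ∑ i, (v i)^2 := by
  have h1 : ∑ i, (U.mulVec v i)^2 = (U.mulVec v) ⬝ᵥ (U.mulVec v) := by
    simp [dotProduct, sq]
  have h2 : ∑ i, (v i)^2 = v ⬝ᵥ v := by simp [dotProduct, sq]
  rw [h1, h2, Matrix.dotProduct_mulVec]
  have : U.vecMul (U.mulVec v) = v := by
    rw [← Matrix.mulVec_transpose, Matrix.mulVec_mulVec, hU, Matrix.one_mulVec]
  rw [this]

lemma scalar_key (a σ ν v d : ℝ) (hσ : σ ≠ 0) (hden : a^2*σ^2 + ν ≠ 0) :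
    (a*v - d)^2 + (ν/σ^2)*v^2 - ((a*((σ^2*a/(a^2*σ^2+ν))*d) - d)^2
      + (ν/σ^2)*((σ^2*a/(a^2*σ^2+ν))*d)^2)
    = (a^2 + ν/σ^2)*(v - (σ^2*a/(a^2*σ^2+ν))*d)^2 := by
  field_simp
  ring

/-- **Theorem 5 (filtering part).** If the observation operator is the graph filter `h(L)` and
the penalization weights satisfy `w² = n/s²` on the spectrum, then the Wiener optimization
objective `x ↦ ‖h(L)x − y‖₂² + ‖w(L)x‖₂²` attains its unique global minimum at
`x̄ = g(L)y`, where `g(λ) = s²(λ)h(λ)/(h²(λ)s²(λ) + n(λ))` is the graph Wiener filter. -/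
theorem wiener_optimization_solved_by_wiener_filter
    {N : ℕ} (L U : Matrix (Fin N) (Fin N) ℝ) (lam : Fin N → ℝ)
    (h s n w : ℝ → ℝ) (y : Fin N → ℝ)
    (hLsym : L.IsSymm) (hU : Uᵀ * U = 1)
    (hEig : ∀ ℓ, L.mulVec (fun i => U i ℓ) = lam ℓ • (fun i => U i ℓ))
    (hs : ∀ ℓ, s (lam ℓ) ≠ 0)
    (hpos : ∀ ℓ, 0 < (h (lam ℓ))^2 * (s (lam ℓ))^2 + n (lam ℓ))
    (hw : ∀ ℓ, (w (lam ℓ))^2 = n (lam ℓ) / (s (lam ℓ))^2) :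
    let F : (Fin N → ℝ) → ℝ := fun x =>
      (∑ i, ((graphFilter U lam h).mulVec x i - y i)^2) +
        ∑ i, ((graphFilter U lam w).mulVec x i)^2
    let xbar : Fin N → ℝ :=
      (graphFilter U lam (fun t => (s t)^2 * h t / ((h t)^2 * (s t)^2 + n t))).mulVec y
    ∀ x : Fin N → ℝ, F xbar ≤ F x ∧ (F x = F xbar → x = xbar) := by
  intro F xbar x
  have hFdef : F = fun x =>
      (∑ i, ((graphFilter U lam h).mulVec x i - y i)^2) +
        ∑ i, ((graphFilter U lam w).mulVec x i)^2 := rfl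
  have hUU' : U * Uᵀ = 1 := mul_eq_one_comm.mp hU
  have hUtU : ∀ v : Fin N → ℝ, Uᵀ.mulVec (U.mulVec v) = v := fun v => by
    rw [Matrix.mulVec_mulVec, hU, Matrix.one_mulVec]
  have hUUt : ∀ v : Fin N → ℝ, U.mulVec (Uᵀ.mulVec v) = v := fun v => by
    rw [Matrix.mulVec_mulVec, hUU', Matrix.one_mulVec]
  set c : Fin N → ℝ := Uᵀ.mulVec x with hc
  set d : Fin N → ℝ := Uᵀ.mulVec y with hd
  have hx : U.mulVec c = x := hUUt x
  have hy : U.mulVec d = y := hUUt y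
  set g : ℝ → ℝ := fun t => (s t)^2 * h t / ((h t)^2 * (s t)^2 + n t) with hg
  have hxbar : xbar = U.mulVec (fun ℓ => g (lam ℓ) * d ℓ) := by
    show (graphFilter U lam g).mulVec y = _
    rw [filter_mulVec]
  -- value of F on U.mulVec v
  have hF : ∀ v : Fin N → ℝ, F (U.mulVec v)
      = ∑ ℓ, ((h (lam ℓ) * v ℓ - d ℓ)^2 + (w (lam ℓ) * v ℓ)^2) := by
    intro v
    have e1 : (graphFilter U lam h).mulVec (U.mulVec v) - y
        = U.mulVec (fun ℓ => h (lam ℓ) * v ℓ - d ℓ) := by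
      have : (fun ℓ => h (lam ℓ) * v ℓ - d ℓ)
          = (fun ℓ => h (lam ℓ) * v ℓ) - d := rfl
      rw [this, Matrix.mulVec_sub, hy, filter_mulVec, hUtU]
    have e2 : (graphFilter U lam w).mulVec (U.mulVec v)
        = U.mulVec (fun ℓ => w (lam ℓ) * v ℓ) := by
      rw [filter_mulVec, hUtU]
    have t1 : ∑ i, ((graphFilter U lam h).mulVec (U.mulVec v) i - y i)^2
        = ∑ ℓ, (h (lam ℓ) * v ℓ - d ℓ)^2 := by
      have : ∀ i, (graphFilter U lam h).mulVec (U.mulVec v) i - y i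
          = U.mulVec (fun ℓ => h (lam ℓ) * v ℓ - d ℓ) i := fun i =>
        congrFun e1 i
      simp only [this]
      exact norm_pres U hU _
    have t2 : ∑ i, ((graphFilter U lam w).mulVec (U.mulVec v) i)^2
        = ∑ ℓ, (w (lam ℓ) * v ℓ)^2 := by
      rw [e2]; exact norm_pres U hU _
    rw [hFdef]
    simp only
    rw [t1, t2, Finset.sum_add_distrib]
  -- key difference identity
  have hdiff : F x - F xbar
      = ∑ ℓ, ((h (lam ℓ))^2 + n (lam ℓ)/(s (lam ℓ))^2) * (c ℓ - g (lam ℓ) * d ℓ)^2 := by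
    rw [← hx, hxbar, hF, hF, ← Finset.sum_sub_distrib]
    refine Finset.sum_congr rfl fun ℓ _ => ?_
    have hwsq : ∀ t : ℝ, (w (lam ℓ) * t)^2 = (n (lam ℓ)/(s (lam ℓ))^2) * t^2 := by
      intro t; rw [mul_pow, hw ℓ]
    rw [hwsq, hwsq]
    have := scalar_key (h (lam ℓ)) (s (lam ℓ)) (n (lam ℓ)) (c ℓ) (d ℓ) (hs ℓ)
      (ne_of_gt (hpos ℓ))
    simpa [hg] using this
  have hkpos : ∀ ℓ, 0 < (h (lam ℓ))^2 + n (lam ℓ)/(s (lam ℓ))^2 := by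
    intro ℓ
    have hs2 : 0 < (s (lam ℓ))^2 := by
      have := hs ℓ; positivity
    have : (h (lam ℓ))^2 + n (lam ℓ)/(s (lam ℓ))^2
        = ((h (lam ℓ))^2 * (s (lam ℓ))^2 + n (lam ℓ))/(s (lam ℓ))^2 := by
      rw [add_div, mul_div_assoc, div_self hs2.ne', mul_one]
    rw [this]
    exact div_pos (hpos ℓ) hs2
  have hsum_nonneg : 0 ≤ F x - F xbar := by
    rw [hdiff]
    exact Finset.sum_nonneg fun ℓ _ =>
      mul_nonneg (le_of_lt (hkpos ℓ)) (sq_nonneg _)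
  constructor
  · linarith
  · intro heq
    have hzero : ∑ ℓ, ((h (lam ℓ))^2 + n (lam ℓ)/(s (lam ℓ))^2)
        * (c ℓ - g (lam ℓ) * d ℓ)^2 = 0 := by
      rw [← hdiff, heq]; ring
    have hall : ∀ ℓ ∈ Finset.univ, ((h (lam ℓ))^2 + n (lam ℓ)/(s (lam ℓ))^2)
        * (c ℓ - g (lam ℓ) * d ℓ)^2 = 0 :=
      (Finset.sum_eq_zero_iff_of_nonneg fun ℓ _ =>
        mul_nonneg (le_of_lt (hkpos ℓ)) (sq_nonneg _)).mp hzero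
    have hceq : c = fun ℓ => g (lam ℓ) * d ℓ := by
      funext ℓ
      have h0 := hall ℓ (Finset.mem_univ ℓ)
      have h1 : (c ℓ - g (lam ℓ) * d ℓ)^2 = 0 :=
        (mul_eq_zero.mp h0).resolve_left (ne_of_gt (hkpos ℓ))
      have := pow_eq_zero_iff (n := 2) (by norm_num) |>.mp h1
      linarith [this]
    rw [← hx, hceq, hxbar]
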